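/- With the exponential tilting $\pi_\eta(v) \propto \pi(v)\exp(-\eta \pi(v))$ (negated probability as advantage), if $\pi$ is not the uniform distribution on its full support, then there exists $\eta_0 > 0$ such that for all $0 < \eta < \eta_0$, the entropy satisfies $H(\pi_\eta) > H(\pi)$. -/

import Mathlib

/-!
The tilted distributions form a smooth curve through `π` at `η = 0` with velocity
`π v * (𝔼_π a - a v)`. Differentiating the entropy along it gives `Cov_π(a, log π)`, which for
`a = π` is positive by the weighted Chebyshev sum inequality: `π` and `log π` vary together and
`π` is not constant. A positive derivative at `0` makes the entropy increase for small `η > 0`.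
-/

open Finset Topology

theorem HasDerivAt.exists_right_lt_of_pos {f : ℝ → ℝ} {c x : ℝ} (hf : HasDerivAt f c x)
    (hc : 0 < c) : ∃ u > x, ∀ y, x < y → y < u → f x < f y := by
  have hslope : ∀ᶠ y in 𝓝[>] x, 0 < slope f x y :=
    ((hasDerivAt_iff_tendsto_slope.mp hf).mono_left (nhdsGT_le_nhdsNE x)).eventually
      (eventually_gt_nhds hc)
  obtain ⟨u, hxu, hsub⟩ := mem_nhdsGT_iff_exists_Ioo_subset.mp hslope
  refine ⟨u, hxu, fun y hxy hyu => ?_⟩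
  have hpos : 0 < (y - x)⁻¹ * (f y - f x) := hsub ⟨hxy, hyu⟩
  exact sub_pos.mp (pos_of_mul_pos_right hpos (inv_nonneg.mpr (sub_nonneg.mpr hxy.le)))

section

variable {V : Type*} [Fintype V]

noncomputable def entropy (p : V → ℝ) : ℝ := -∑ v, p v * Real.log (p v)

/-- The paper's tilt by an advantage `A` is `tilt π (-A)`; the theorem takes `A = -π`. -/
noncomputable def tilt (π a : V → ℝ) (η : ℝ) (v : V) : ℝ :=
  π v * Real.exp (-η * a v) / ∑ w, π w * Real.exp (-η * a w)

/-- The covariance of `a` and `b` under `π` when `∑ v, π v = 1`. -/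
def weightedCov (π a b : V → ℝ) : ℝ :=
  ∑ v, π v * a v * b v - (∑ v, π v * a v) * ∑ v, π v * b v

theorem two_mul_weightedCov (π a b : V → ℝ) (hsum : ∑ v, π v = 1) :
    2 * weightedCov π a b = ∑ v, ∑ w, π v * π w * ((a v - a w) * (b v - b w)) := by
  have hexpand : ∀ v w, π v * π w * ((a v - a w) * (b v - b w)) =
      π v * a v * b v * π w + π v * (π w * a w * b w)
        - π v * a v * (π w * b w) - π v * b v * (π w * a w) := fun v w => by ring
  simp only [hexpand, sum_add_distrib, sum_sub_distrib, ← mul_sum, ← sum_mul, hsum,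
    weightedCov]
  ring

theorem weightedCov_pos {π a b : V → ℝ} (hπ : ∀ v, 0 < π v) (hsum : ∑ v, π v = 1)
    (hab : Monovary a b) (hne : ∃ v w, a v ≠ a w ∧ b v ≠ b w) : 0 < weightedCov π a b := by
  have hterm : ∀ v w, 0 ≤ π v * π w * ((a v - a w) * (b v - b w)) := fun v w =>
    mul_nonneg (mul_pos (hπ v) (hπ w)).le (hab.sub_mul_sub_nonneg w v)
  obtain ⟨v, w, hav, hbv⟩ := hne
  have hvw : 0 < π v * π w * ((a v - a w) * (b v - b w)) :=
    (hterm v w).lt_of_ne' (by simp [(hπ v).ne', (hπ w).ne', sub_ne_zero, hav, hbv])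
  have := sum_pos' (fun v _ => sum_nonneg fun w _ => hterm v w)
    ⟨v, mem_univ v, sum_pos' (fun w _ => hterm v w) ⟨w, mem_univ w, hvw⟩⟩
  rw [← two_mul_weightedCov π a b hsum] at this
  linarith

theorem hasDerivAt_entropy {p : ℝ → V → ℝ} {p' : V → ℝ} {t : ℝ}
    (hp : ∀ v, HasDerivAt (p · v) (p' v) t) (hne : ∀ v, p t v ≠ 0) :
    HasDerivAt (fun s => entropy (p s)) (-∑ v, p' v * (Real.log (p t v) + 1)) t := by
  have hterm v : HasDerivAt (fun s => Real.negMulLog (p s v))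
      ((-Real.log (p t v) - 1) * p' v) t :=
    (Real.hasDerivAt_negMulLog (hne v)).comp (h := (p · v)) t (hp v)
  have hfun : (fun s => entropy (p s)) = fun s => ∑ v, Real.negMulLog (p s v) := by
    ext s
    simp [entropy, Real.negMulLog]
  rw [hfun]
  refine (HasDerivAt.fun_sum (u := univ) fun v _ => hterm v).congr_deriv ?_
  rw [← sum_neg_distrib]
  congr 1 with v
  ring

theorem tilt_zero (π a : V → ℝ) (hsum : ∑ v, π v = 1) : tilt π a 0 = π := by
  ext v
  simp [tilt, hsum]

theorem hasDerivAt_tilt_zero (π a : V → ℝ) (hsum : ∑ v, π v = 1) (v : V) :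
    HasDerivAt (tilt π a · v) (π v * (∑ w, π w * a w - a v)) 0 := by
  have hweight w : HasDerivAt (fun η => π w * Real.exp (-η * a w)) (-(π w * a w)) 0 := by
    simpa using (((hasDerivAt_id 0).neg.mul_const (a w)).exp).const_mul (π w)
  have hZ : HasDerivAt (fun η => ∑ w, π w * Real.exp (-η * a w)) (-∑ w, π w * a w) 0 := by
    simpa using HasDerivAt.fun_sum (u := univ) fun w _ => hweight w
  refine ((hweight v).fun_div hZ (by simp [hsum])).congr_deriv ?_
  simp only [neg_zero, zero_mul, Real.exp_zero, mul_one, hsum]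
  ring

theorem hasDerivAt_entropy_tilt_zero {π : V → ℝ} (a : V → ℝ) (hπ : ∀ v, 0 < π v)
    (hsum : ∑ v, π v = 1) :
    HasDerivAt (fun η => entropy (tilt π a η)) (weightedCov π a (Real.log ∘ π)) 0 := by
  refine (hasDerivAt_entropy (hasDerivAt_tilt_zero π a hsum)
    (by simp [tilt_zero π a hsum, (hπ _).ne'])).congr_deriv ?_
  set E := ∑ w, π w * a w
  have hexpand : ∀ v, π v * (E - a v) * (Real.log (π v) + 1) =
      E * (π v * Real.log (π v)) + E * π v - π v * a v * Real.log (π v) - π v * a v :=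
    fun v => by ring
  simp only [tilt_zero π a hsum, hexpand, sum_add_distrib, sum_sub_distrib, ← mul_sum, hsum,
    weightedCov, Function.comp_apply]
  ring

end

theorem entropy_increases_tilt_by_neg_prob_general {V : Type*} [Fintype V]
    (π : V → ℝ) (hpos : ∀ v, 0 < π v) (hsum : ∑ v, π v = 1)
    (hnc : ∃ v w : V, π v ≠ π w) :
    ∃ η₀ > 0, ∀ η : ℝ, 0 < η → η < η₀ →
      (-∑ v, π v * Real.log (π v))
        < -∑ v, (π v * Real.exp (-η * π v) / ∑ w, π w * Real.exp (-η * π w))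
              * Real.log (π v * Real.exp (-η * π v) / ∑ w, π w * Real.exp (-η * π w)) := by
  have hmono : Monovary π (Real.log ∘ π) := fun v w h =>
    ((Real.log_lt_log_iff (hpos v) (hpos w)).mp h).le
  have hne : ∃ v w, π v ≠ π w ∧ Real.log (π v) ≠ Real.log (π w) := by
    obtain ⟨v, w, h⟩ := hnc
    exact ⟨v, w, h, fun h' => h (Real.log_injOn_pos (hpos v) (hpos w) h')⟩
  obtain ⟨η₀, hη₀, hlt⟩ := (hasDerivAt_entropy_tilt_zero π hpos hsum).exists_right_lt_of_pos
    (weightedCov_pos hpos hsum hmono hne)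
  refine ⟨η₀, hη₀, fun η hη hηη₀ => ?_⟩
  have := hlt η hη hηη₀
  rwa [tilt_zero π π hsum] at this

/-- Under exponential tilting with advantage `A(v) = -π(v)`, a non-uniform
positive pmf has strictly increased entropy for all sufficiently small `η > 0`. -/
theorem entropy_increases_tilt_by_neg_prob {V : Type*} [Fintype V]
    (hcard : 2 ≤ Fintype.card V)
    (π : V → ℝ) (hpos : ∀ v, 0 < π v) (hsum : ∑ v, π v = 1)
    (hnc : ∃ v w : V, π v ≠ π w) :
    ∃ η₀ > 0, ∀ η : ℝ, 0 < η → η < η₀ →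
      (-∑ v, π v * Real.log (π v))
        < -∑ v, (π v * Real.exp (-η * π v) / ∑ w, π w * Real.exp (-η * π w))
              * Real.log (π v * Real.exp (-η * π v) / ∑ w, π w * Real.exp (-η * π w)) :=
  entropy_increases_tilt_by_neg_prob_general π hpos hsum hnc
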